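/- arXiv:2007.12489 — 5 statements merged into one kernel-verified Lean document; each statement's English description precedes it below -/
import Mathlib

section
/- If $z_1,\dots,z_{k-1} \in [0,1]$, then $\left(\sum_{i=1}^{k-1} z_i\right)\prod_{i=1}^{k-1}(1-z_i) \le \frac{k-1}{k}\left(1-\frac{1}{k}\right)^{k-1}$. -/
open Finset in
lemma amgm_aux {ι : Type*} [Fintype ι] [Nonempty ι] (a : ι → ℝ) (ha : ∀ i, 0 ≤ a i) :
    ∏ i, a i ≤ ((∑ i, a i) / (Fintype.card ι)) ^ (Fintype.card ι) := by
  set n := Fintype.card ι with hn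
  have hn0 : 0 < n := Fintype.card_pos
  have hc : (0:ℝ) < n := by exact_mod_cast hn0
  have h := Real.geom_mean_le_arith_mean_weighted Finset.univ (fun _ => (n:ℝ)⁻¹) a
    (fun i _ => by positivity) (by simp [Finset.card_univ, mul_comm, inv_mul_cancel₀ hc.ne']; exact mul_inv_cancel₀ hc.ne')
    (fun i _ => ha i)
  have hsum : ∑ i, (n:ℝ)⁻¹ * a i = (∑ i, a i) / n := by
    rw [← Finset.mul_sum, inv_mul_eq_div]
  rw [hsum] at h
  have key : (∏ i, a i ^ ((n:ℝ)⁻¹)) ^ n = ∏ i, a i := by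
    rw [← Finset.prod_pow]
    refine Finset.prod_congr rfl fun i _ => ?_
    rw [← Real.rpow_natCast (a i ^ ((n:ℝ)⁻¹)) n, ← Real.rpow_mul (ha i),
      inv_mul_cancel₀ hc.ne', Real.rpow_one]
  calc ∏ i, a i = (∏ i, a i ^ ((n:ℝ)⁻¹)) ^ n := key.symm
    _ ≤ ((∑ i, a i) / n) ^ n := by
        apply pow_le_pow_left₀ _ h
        exact Finset.prod_nonneg fun i _ => Real.rpow_nonneg (ha i) _

lemma helper_amgm (n : ℕ) (hn1 : 1 ≤ n) (z : Fin n → ℝ)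
    (hz : ∀ i, 0 ≤ z i ∧ z i ≤ 1) :
    (∑ i, z i) * (∏ i, (1 - z i)) ≤ ((n:ℝ)/((n:ℝ)+1))^(n+1) := by
  have hnr : (0:ℝ) < n := by exact_mod_cast hn1
  set S := ∑ i, z i with hS
  have hS0 : 0 ≤ S := Finset.sum_nonneg fun i _ => (hz i).1
  set a : Option (Fin n) → ℝ := fun o => o.elim ((n:ℝ) * S) (fun i => (n:ℝ) * (1 - z i)) with ha
  have hanneg : ∀ o, 0 ≤ a o := by
    rintro (_ | i)
    · exact mul_nonneg hnr.le hS0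
    · exact mul_nonneg hnr.le (by linarith [(hz i).2])
  have hcard : Fintype.card (Option (Fin n)) = n + 1 := by simp
  have h := amgm_aux a hanneg
  rw [hcard] at h
  have hsum : ∑ o, a o = (n:ℝ)^2 := by
    rw [Fintype.sum_option]
    simp only [ha, Option.elim]
    rw [← Finset.mul_sum, Finset.sum_sub_distrib, Finset.sum_const, Finset.card_univ,
      Fintype.card_fin]
    push_cast
    ring
  have hprod : ∏ o, a o = (n:ℝ)^(n+1) * (S * ∏ i, (1 - z i)) := by
    rw [Fintype.prod_option]
    simp only [ha, Option.elim]
    rw [Finset.prod_mul_distrib, Finset.prod_const, Finset.card_univ, Fintype.card_fin]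
    ring
  rw [hsum, hprod] at h
  push_cast at h
  have hmp : (0:ℝ) < (n:ℝ)^(n+1) := by positivity
  have e : ((n:ℝ)^2/((n:ℝ)+1))^(n+1) = (n:ℝ)^(n+1) * ((n:ℝ)/((n:ℝ)+1))^(n+1) := by
    rw [div_pow, pow_two, mul_pow, mul_div_assoc, ← div_pow]
  rw [e] at h
  exact le_of_mul_le_mul_left h hmp

theorem stmt_0 (k : ℕ) (hk : 2 ≤ k) (z : Fin (k - 1) → ℝ)
    (hz : ∀ i, 0 ≤ z i ∧ z i ≤ 1) :
    (∑ i, z i) * (∏ i, (1 - z i)) ≤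
      ((k : ℝ) - 1) / k * (1 - 1 / k) ^ (k - 1) := by
  have h := helper_amgm (k - 1) (by omega) z hz
  refine h.trans_eq ?_
  have hkr : (0:ℝ) < (k:ℝ) := by exact_mod_cast (by omega : 0 < k)
  have hc : ((k - 1 : ℕ) : ℝ) = (k:ℝ) - 1 := by
    rw [Nat.cast_sub (by omega)]; norm_num
  have hk1 : k - 1 + 1 = k := by omega
  have hb : ((k - 1 : ℕ) : ℝ) / (((k - 1 : ℕ) : ℝ) + 1) = ((k:ℝ) - 1) / k := by
    rw [hc]; congr 1; ring
  have h2 : (1 - 1/(k:ℝ)) = ((k:ℝ)-1)/(k:ℝ) := by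
    field_simp
  rw [hb, h2, pow_succ, mul_comm]
end

section
/- Greedy guarantee with a fixed element: let $f : 2^{[n]} \to \mathbb{R}$ be non-negative, monotone non-decreasing, and submodular. Let $S_0 = \emptyset$ and, for $\ell = 1,\dots,k-1$, let $S_\ell = S_{\ell-1} \cup \{i_\ell\}$ where $i_\ell$ maximizes $f(S_{\ell-1} \cup \{i\}) - f(S_{\ell-1})$ over $i \in [n]$. Then $f(S_{k-1}) \ge \left(1 - \left(1-\frac{1}{k}\right)^{k-1}\right) \cdot \max_{|T| \le k} f(T)$. -/
/-!
Each greedy step closes at least a `1/k` fraction of the remaining gap to `f T`: by submodularity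
the marginal gains of the at most `k` elements of `T` over `S ℓ` add up to at least
`f T - f (S ℓ)`, and the greedy element gains at least their average. After `k - 1` steps the gap
is at most `(1 - 1/k)^(k-1) f T`.
-/

namespace SetFunction

variable {α : Type*} [DecidableEq α] {f : Finset α → ℝ}

theorem marginal_antitone_of_monotone (hmono : Monotone f)
    (hsub : ∀ S T : Finset α, ∀ j, S ⊆ T → j ∉ T →
      f (insert j T) - f T ≤ f (insert j S) - f S)
    {B C : Finset α} (j : α) (hBC : B ⊆ C) :
    f (insert j C) - f C ≤ f (insert j B) - f B := by
  by_cases hj : j ∈ C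
  · rw [Finset.insert_eq_of_mem hj, sub_self, sub_nonneg]
    exact hmono (Finset.subset_insert j B)
  · exact hsub B C j hBC hj

theorem le_add_sum_marginal (hmono : Monotone f)
    (hsub : ∀ S T : Finset α, ∀ j, S ⊆ T → j ∉ T →
      f (insert j T) - f T ≤ f (insert j S) - f S)
    (A B : Finset α) :
    f (B ∪ A) ≤ f B + ∑ j ∈ A, (f (insert j B) - f B) := by
  induction A using Finset.induction_on with
  | empty => simp
  | insert a A ha ih =>
    rw [Finset.sum_insert ha, Finset.union_insert]
    have := marginal_antitone_of_monotone hmono hsub a (Finset.subset_union_left : B ⊆ B ∪ A)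
    linarith

theorem sub_le_card_mul_greedy_gain (hmono : Monotone f)
    (hsub : ∀ S T : Finset α, ∀ j, S ⊆ T → j ∉ T →
      f (insert j T) - f T ≤ f (insert j S) - f S)
    (S T : Finset α) {i : α}
    (hmax : ∀ j, f (insert j S) - f S ≤ f (insert i S) - f S) :
    f T - f S ≤ T.card * (f (insert i S) - f S) := by
  calc f T - f S ≤ f (S ∪ T) - f S := by
        gcongr; exact hmono Finset.subset_union_right
    _ ≤ ∑ j ∈ T, (f (insert j S) - f S) := by
        linarith [le_add_sum_marginal hmono hsub T S]
    _ ≤ ∑ _j ∈ T, (f (insert i S) - f S) := Finset.sum_le_sum fun j _ => hmax j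
    _ = T.card * (f (insert i S) - f S) := by rw [Finset.sum_const, nsmul_eq_mul]

end SetFunction

theorem sub_le_one_sub_inv_pow_mul {a c : ℝ} {g : ℕ → ℝ} {m : ℕ} (hc : 1 ≤ c)
    (h0 : 0 ≤ g 0) (hstep : ∀ l < m, a - g l ≤ c * (g (l + 1) - g l)) :
    a - g m ≤ (1 - 1 / c) ^ m * a := by
  induction m with
  | zero => simpa using h0
  | succ m ih =>
    have hq : 0 ≤ 1 - 1 / c := by
      rw [sub_nonneg, div_le_one (by linarith)]; exact hc
    have hshrink : a - g (m + 1) ≤ (1 - 1 / c) * (a - g m) := by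
      have hgain : (a - g m) / c ≤ g (m + 1) - g m := by
        rw [div_le_iff₀ (by linarith), mul_comm]; exact hstep m (Nat.lt_succ_self m)
      calc a - g (m + 1) ≤ (a - g m) - (a - g m) / c := by linarith
        _ = (1 - 1 / c) * (a - g m) := by ring
    calc a - g (m + 1) ≤ (1 - 1 / c) * (a - g m) := hshrink
      _ ≤ (1 - 1 / c) * ((1 - 1 / c) ^ m * a) :=
          mul_le_mul_of_nonneg_left (ih fun l hl => hstep l (by omega)) hq
      _ = (1 - 1 / c) ^ (m + 1) * a := by ring

theorem stmt_5_general (n k : ℕ) (hk : 2 ≤ k)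
    (f : Finset (Fin n) → ℝ)
    (hnonneg : ∀ S, 0 ≤ f S)
    (hmono : ∀ S T, S ⊆ T → f S ≤ f T)
    (hsub : ∀ S T : Finset (Fin n), ∀ j, S ⊆ T → j ∉ T →
      f (insert j T) - f T ≤ f (insert j S) - f S)
    (S : ℕ → Finset (Fin n))
    (hgreedy : ∀ ℓ < k - 1, ∃ i : Fin n,
      S (ℓ + 1) = insert i (S ℓ) ∧
      ∀ j : Fin n, f (insert j (S ℓ)) - f (S ℓ) ≤ f (insert i (S ℓ)) - f (S ℓ)) :
    ∀ T : Finset (Fin n), T.card ≤ k →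
      (1 - (1 - 1 / (k : ℝ)) ^ (k - 1)) * f T ≤ f (S (k - 1)) := by
  intro T hT
  have hmono' : Monotone f := fun A B h => hmono A B h
  have hstep : ∀ ℓ < k - 1, f T - f (S ℓ) ≤ k * (f (S (ℓ + 1)) - f (S ℓ)) := by
    intro ℓ hℓ
    obtain ⟨i, hSi, hmax⟩ := hgreedy ℓ hℓ
    rw [hSi]
    have hgain : 0 ≤ f (insert i (S ℓ)) - f (S ℓ) :=
      sub_nonneg.mpr (hmono _ _ (Finset.subset_insert i (S ℓ)))
    calc f T - f (S ℓ) ≤ T.card * (f (insert i (S ℓ)) - f (S ℓ)) :=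
          SetFunction.sub_le_card_mul_greedy_gain hmono' hsub (S ℓ) T hmax
      _ ≤ k * (f (insert i (S ℓ)) - f (S ℓ)) := by gcongr
  have hgap := sub_le_one_sub_inv_pow_mul (a := f T) (g := fun ℓ => f (S ℓ))
    (by exact_mod_cast (by omega : 1 ≤ k)) (hnonneg _) hstep
  linarith

theorem stmt_5 (n k : ℕ) (hk : 2 ≤ k) (hkn : k ≤ n)
    (f : Finset (Fin n) → ℝ)
    (hnonneg : ∀ S, 0 ≤ f S)
    (hmono : ∀ S T, S ⊆ T → f S ≤ f T)
    (hsub : ∀ S T : Finset (Fin n), ∀ j, S ⊆ T → j ∉ T →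
      f (insert j T) - f T ≤ f (insert j S) - f S)
    (S : ℕ → Finset (Fin n))
    (hS0 : S 0 = ∅)
    (hgreedy : ∀ ℓ < k - 1, ∃ i : Fin n,
      S (ℓ + 1) = insert i (S ℓ) ∧
      ∀ j : Fin n, f (insert j (S ℓ)) - f (S ℓ) ≤ f (insert i (S ℓ)) - f (S ℓ)) :
    ∀ T : Finset (Fin n), T.card ≤ k →
      (1 - (1 - 1 / (k : ℝ)) ^ (k - 1)) * f T ≤ f (S (k - 1)) :=
  stmt_5_general n k hk f hnonneg hmono hsub S hgreedy
end

section
/- If $f$ is non-negative, monotone, submodular with $f(\emptyset) \ge 0$, then $\max_{S \subseteq T, |S| = m} f(S) \ge \frac{m}{|T|} f(T)$ for every $0 \le m \le |T|$. -/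
lemma tele_aux (n : ℕ) (f : Finset (Fin n) → ℝ)
    (hsub : ∀ S T : Finset (Fin n), ∀ j, S ⊆ T → j ∉ T →
      f (insert j T) - f T ≤ f (insert j S) - f S) :
    ∀ k (S T : Finset (Fin n)), (T \ S).card = k → S ⊆ T →
      f T - f S ≤ ∑ j ∈ T \ S, (f (insert j S) - f S) := by
  intro k
  induction k with
  | zero =>
    intro S T hc hST
    have h : T \ S = ∅ := Finset.card_eq_zero.mp hc
    have : T = S := Finset.Subset.antisymm (fun x hx => by
      by_contra hxS
      have : x ∈ T \ S := Finset.mem_sdiff.mpr ⟨hx, hxS⟩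
      simp [h] at this) hST
    simp [this, h]
  | succ k ih =>
    intro S T hc hST
    have hne : (T \ S).Nonempty := Finset.card_pos.mp (by omega)
    obtain ⟨j, hj⟩ := hne
    obtain ⟨hjT, hjS⟩ := Finset.mem_sdiff.mp hj
    set S' := insert j S with hS'
    have hS'T : S' ⊆ T := Finset.insert_subset hjT hST
    have hsd : T \ S' = (T \ S).erase j := by
      ext x; simp [hS', Finset.mem_sdiff, Finset.mem_erase, and_comm]
      tauto
    have hc' : (T \ S').card = k := by
      rw [hsd, Finset.card_erase_of_mem hj, hc]; omega
    have h1 := ih S' T hc' hS'T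
    have h2 : ∑ i ∈ T \ S', (f (insert i S') - f S') ≤
        ∑ i ∈ T \ S', (f (insert i S) - f S) := by
      apply Finset.sum_le_sum
      intro i hi
      have hiS' : i ∉ S' := (Finset.mem_sdiff.mp hi).2
      exact hsub S S' i (Finset.subset_insert j S) hiS'
    have hins : T \ S = insert j (T \ S') := by
      rw [hsd, Finset.insert_erase hj]
    rw [hins, Finset.sum_insert (by rw [hsd]; exact Finset.notMem_erase j _)]
    have : f T - f S = (f T - f S') + (f S' - f S) := by ring
    rw [this]
    linarith

theorem stmt_6 (n : ℕ) (f : Finset (Fin n) → ℝ)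
    (hnonneg : ∀ S, 0 ≤ f S)
    (hmono : ∀ S T, S ⊆ T → f S ≤ f T)
    (hsub : ∀ S T : Finset (Fin n), ∀ j, S ⊆ T → j ∉ T →
      f (insert j T) - f T ≤ f (insert j S) - f S)
    (T : Finset (Fin n)) (m : ℕ) (hm : m ≤ T.card) :
    ∃ S ⊆ T, S.card = m ∧ ((m : ℝ) / (T.card : ℝ)) * f T ≤ f S := by
  induction m with
  | zero =>
    refine ⟨∅, Finset.empty_subset T, rfl, ?_⟩
    simpa using hnonneg ∅
  | succ m ih =>
    obtain ⟨S, hST, hcard, hlb⟩ := ih (by omega)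
    have hmlt : m < T.card := by omega
    have hcsd : (T \ S).card = T.card - m := by
      rw [Finset.card_sdiff_of_subset hST, hcard]
    have hne : (T \ S).Nonempty := Finset.card_pos.mp (by omega)
    have htele := tele_aux n f hsub (T \ S).card S T rfl hST
    -- average argument
    have havg : ∃ j ∈ T \ S,
        (f T - f S) / ((T.card - m : ℕ) : ℝ) ≤ f (insert j S) - f S := by
      by_contra hcon
      push_neg at hcon
      have hsum : ∑ j ∈ T \ S, (f (insert j S) - f S) <
          ∑ j ∈ T \ S, (f T - f S) / ((T.card - m : ℕ) : ℝ) :=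
        Finset.sum_lt_sum_of_nonempty hne hcon
      rw [Finset.sum_const, hcsd, nsmul_eq_mul] at hsum
      have hd : (0:ℝ) < ((T.card - m : ℕ) : ℝ) := by
        have : 0 < T.card - m := by omega
        exact_mod_cast this
      rw [mul_div_cancel₀ _ (ne_of_gt hd)] at hsum
      linarith
    obtain ⟨j, hj, hgain⟩ := havg
    obtain ⟨hjT, hjS⟩ := Finset.mem_sdiff.mp hj
    refine ⟨insert j S, Finset.insert_subset hjT hST, ?_, ?_⟩
    · rw [Finset.card_insert_of_notMem hjS, hcard]
    · have hKpos : (0:ℝ) < (T.card : ℝ) := by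
        have h0 : 0 < T.card := by omega
        exact_mod_cast h0
      have hdcast : ((T.card - m : ℕ) : ℝ) = (T.card : ℝ) - m := by
        rw [Nat.cast_sub (le_of_lt hmlt)]
      rw [hdcast] at hgain
      have hD : (1:ℝ) ≤ (T.card : ℝ) - m := by
        have : m + 1 ≤ T.card := hm
        have := Nat.cast_le (α := ℝ) |>.mpr this
        push_cast at this ⊢; linarith
      have hgain' : f T - f S ≤ ((T.card : ℝ) - m) * (f (insert j S) - f S) := by
        rw [div_le_iff₀ (by linarith)] at hgain
        linarith [hgain]
      have hfT : 0 ≤ f T := hnonneg T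
      have hlb' : (m : ℝ) * f T ≤ (T.card : ℝ) * f S := by
        rw [div_mul_eq_mul_div, div_le_iff₀ hKpos] at hlb
        linarith
      rw [div_mul_eq_mul_div, div_le_iff₀ hKpos]
      push_cast
      nlinarith [mul_le_mul_of_nonneg_left hgain' (le_of_lt hKpos),
                 mul_le_mul_of_nonneg_right hlb' (by linarith : (0:ℝ) ≤ (T.card : ℝ) - m - 1),
                 mul_le_mul_of_nonneg_left hfT (by linarith : (0:ℝ) ≤ (T.card : ℝ) - m - 1)]
end

section
/- Water-filling over concave functions is submodular: for each $i \in [n]$ let $g_i : [0,1] \to \mathbb{R}$ be non-negative, non-decreasing, and concave with $g_i(0) = 0$, and define $f(S) = \max\{\sum_{i \in S} g_i(z_i) : z_i \ge 0, \sum_{i \in S} z_i \le 1\}$ for $S \subseteq [n]$. Then $f$ is non-negative, monotone non-decreasing, and submodular. -/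
open Finset

namespace WFaux

variable {n : ℕ}

def Y (g : Fin n → ℝ → ℝ) (S : Finset (Fin n)) (t : ℝ) : Set ℝ :=
  {y : ℝ | ∃ z : Fin n → ℝ, (∀ i, 0 ≤ z i) ∧ (∑ i ∈ S, z i) ≤ t ∧ y = ∑ i ∈ S, g i (z i)}

noncomputable def H (g : Fin n → ℝ → ℝ) (S : Finset (Fin n)) (t : ℝ) : ℝ := sSup (Y g S t)

theorem zero_mem (g : Fin n → ℝ → ℝ) (h0 : ∀ i, g i 0 = 0) (S : Finset (Fin n))
    {t : ℝ} (ht : 0 ≤ t) : (0 : ℝ) ∈ Y g S t :=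
  ⟨fun _ => 0, fun _ => le_refl 0, by simpa using ht, by simp [h0]⟩

theorem Y_nonempty (g : Fin n → ℝ → ℝ) (h0 : ∀ i, g i 0 = 0) (S : Finset (Fin n))
    {t : ℝ} (ht : 0 ≤ t) : (Y g S t).Nonempty := ⟨0, zero_mem g h0 S ht⟩

theorem z_mem_Icc (S : Finset (Fin n)) {z : Fin n → ℝ} (hz : ∀ i, 0 ≤ z i)
    {t : ℝ} (hsum : ∑ i ∈ S, z i ≤ t) (ht : t ≤ 1) {i : Fin n} (hi : i ∈ S) :
    z i ∈ Set.Icc (0:ℝ) 1 :=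
  ⟨hz i, le_trans (le_trans (Finset.single_le_sum (fun j _ => hz j) hi) hsum) ht⟩

theorem Y_bdd (g : Fin n → ℝ → ℝ) (hmono : ∀ i, MonotoneOn (g i) (Set.Icc (0:ℝ) 1))
    (S : Finset (Fin n)) {t : ℝ} (ht : t ≤ 1) : BddAbove (Y g S t) := by
  refine ⟨∑ i ∈ S, g i 1, ?_⟩
  rintro y ⟨z, hz, hsum, rfl⟩
  refine Finset.sum_le_sum fun i hi => ?_
  exact hmono i (z_mem_Icc S hz hsum ht hi) ⟨zero_le_one, le_refl 1⟩
    (z_mem_Icc S hz hsum ht hi).2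

theorem le_H (g : Fin n → ℝ → ℝ) (hmono : ∀ i, MonotoneOn (g i) (Set.Icc (0:ℝ) 1))
    (S : Finset (Fin n)) {t : ℝ} (ht : t ≤ 1) {y : ℝ} (hy : y ∈ Y g S t) :
    y ≤ H g S t := le_csSup (Y_bdd g hmono S ht) hy

theorem H_nonneg (g : Fin n → ℝ → ℝ) (hmono : ∀ i, MonotoneOn (g i) (Set.Icc (0:ℝ) 1))
    (h0 : ∀ i, g i 0 = 0) (S : Finset (Fin n)) {t : ℝ} (ht0 : 0 ≤ t) (ht1 : t ≤ 1) :
    0 ≤ H g S t := le_H g hmono S ht1 (zero_mem g h0 S ht0)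

theorem exists_near (g : Fin n → ℝ → ℝ) (h0 : ∀ i, g i 0 = 0) (S : Finset (Fin n))
    {t : ℝ} (ht0 : 0 ≤ t) {ε : ℝ} (hε : 0 < ε) :
    ∃ y ∈ Y g S t, H g S t - ε < y :=
  exists_lt_of_lt_csSup (Y_nonempty g h0 S ht0) (by simp [H]; linarith [sub_lt_self (sSup (Y g S t)) hε])

theorem H_mono_S (g : Fin n → ℝ → ℝ) (hmono : ∀ i, MonotoneOn (g i) (Set.Icc (0:ℝ) 1))
    (h0 : ∀ i, g i 0 = 0) {S T : Finset (Fin n)} (hST : S ⊆ T)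
    {t : ℝ} (ht0 : 0 ≤ t) (ht1 : t ≤ 1) : H g S t ≤ H g T t := by
  refine csSup_le (Y_nonempty g h0 S ht0) ?_
  rintro y ⟨z, hz, hsum, rfl⟩
  refine le_H g hmono T ht1 ⟨fun i => if i ∈ S then z i else 0, ?_, ?_, ?_⟩
  · intro i; dsimp only; split_ifs; exacts [hz i, le_refl 0]
  · rw [Finset.sum_ite_mem, Finset.inter_eq_right.mpr hST]; exact hsum
  · rw [show ∑ i ∈ T, g i (if i ∈ S then z i else 0)
        = ∑ i ∈ T, (if i ∈ S then g i (z i) else 0) from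
      Finset.sum_congr rfl fun i _ => by by_cases h : i ∈ S <;> simp [h, h0]]
    rw [Finset.sum_ite_mem, Finset.inter_eq_right.mpr hST]

theorem H_comb (g : Fin n → ℝ → ℝ) (hmono : ∀ i, MonotoneOn (g i) (Set.Icc (0:ℝ) 1))
    (hconc : ∀ i, ConcaveOn ℝ (Set.Icc (0:ℝ) 1) (g i)) (h0 : ∀ i, g i 0 = 0)
    (S : Finset (Fin n)) {t1 t2 lam : ℝ} (ht10 : 0 ≤ t1) (ht11 : t1 ≤ 1)
    (ht20 : 0 ≤ t2) (ht21 : t2 ≤ 1) (hl0 : 0 ≤ lam) (hl1 : lam ≤ 1) :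
    lam * H g S t1 + (1 - lam) * H g S t2 ≤ H g S (lam * t1 + (1 - lam) * t2) := by
  refine le_of_forall_pos_le_add fun ε hε => ?_
  obtain ⟨y1, ⟨z1, hz1, hs1, rfl⟩, hy1⟩ := exists_near g h0 S ht10 (half_pos hε)
  obtain ⟨y2, ⟨z2, hz2, hs2, rfl⟩, hy2⟩ := exists_near g h0 S ht20 (half_pos hε)
  have hl1' : 0 ≤ 1 - lam := by linarith
  have hval : ∑ i ∈ S, (lam * g i (z1 i) + (1 - lam) * g i (z2 i))
      ≤ ∑ i ∈ S, g i (lam * z1 i + (1 - lam) * z2 i) := by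
    refine Finset.sum_le_sum fun i hi => ?_
    have := (hconc i).2 (z_mem_Icc S hz1 hs1 ht11 hi) (z_mem_Icc S hz2 hs2 ht21 hi)
      hl0 hl1' (by ring)
    simpa [smul_eq_mul] using this
  have hmem : (∑ i ∈ S, g i (lam * z1 i + (1 - lam) * z2 i))
      ∈ Y g S (lam * t1 + (1 - lam) * t2) := by
    refine ⟨fun i => lam * z1 i + (1 - lam) * z2 i,
      fun i => add_nonneg (mul_nonneg hl0 (hz1 i)) (mul_nonneg hl1' (hz2 i)), ?_, rfl⟩
    rw [Finset.sum_add_distrib, ← Finset.mul_sum, ← Finset.mul_sum]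
    exact add_le_add (mul_le_mul_of_nonneg_left hs1 hl0) (mul_le_mul_of_nonneg_left hs2 hl1')
  have hle : (∑ i ∈ S, g i (lam * z1 i + (1 - lam) * z2 i))
      ≤ H g S (lam * t1 + (1 - lam) * t2) := by
    refine le_H g hmono S ?_ hmem
    nlinarith
  rw [Finset.sum_add_distrib, ← Finset.mul_sum, ← Finset.mul_sum] at hval
  have A : lam * (H g S t1 - ε / 2) ≤ lam * ∑ i ∈ S, g i (z1 i) :=
    mul_le_mul_of_nonneg_left hy1.le hl0
  have B : (1 - lam) * (H g S t2 - ε / 2) ≤ (1 - lam) * ∑ i ∈ S, g i (z2 i) :=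
    mul_le_mul_of_nonneg_left hy2.le hl1'
  nlinarith

theorem H_incr (g : Fin n → ℝ → ℝ) (hmono : ∀ i, MonotoneOn (g i) (Set.Icc (0:ℝ) 1))
    (hconc : ∀ i, ConcaveOn ℝ (Set.Icc (0:ℝ) 1) (g i)) (h0 : ∀ i, g i 0 = 0)
    (S : Finset (Fin n)) {a b : ℝ} (ha0 : 0 ≤ a) (ha1 : a ≤ 1) (hb0 : 0 ≤ b)
    (hba : b ≤ 1 - a) :
    H g S 1 - H g S (1 - a) ≤ H g S (b + a) - H g S b := by
  rcases eq_or_lt_of_le ha0 with h | h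
  · simp [← h]
  · have hb1 : b < 1 := by linarith
    set lam := (1 - b - a) / (1 - b) with hlam
    have hne : (1:ℝ) - b ≠ 0 := by linarith
    have hl0 : 0 ≤ lam := div_nonneg (by linarith) (by linarith)
    have hl1 : lam ≤ 1 := (div_le_one (by linarith)).mpr (by linarith)
    have key : lam * (1 - b) = 1 - b - a := by rw [hlam]; exact div_mul_cancel₀ _ hne
    have e1 : lam * b + (1 - lam) * 1 = b + a := by linear_combination (-1 : ℝ) * key
    have e2 : lam * 1 + (1 - lam) * b = 1 - a := by linear_combination key
    have h1 := H_comb g hmono hconc h0 S hb0 hb1.le zero_le_one le_rfl hl0 hl1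
    have h2 := H_comb g hmono hconc h0 S zero_le_one le_rfl hb0 hb1.le hl0 hl1
    rw [e1] at h1
    rw [e2] at h2
    linarith

theorem H_exchange (g : Fin n → ℝ → ℝ) (hmono : ∀ i, MonotoneOn (g i) (Set.Icc (0:ℝ) 1))
    (hconc : ∀ i, ConcaveOn ℝ (Set.Icc (0:ℝ) 1) (g i)) (h0 : ∀ i, g i 0 = 0)
    {S T : Finset (Fin n)} (hST : S ⊆ T) {a : ℝ} (ha0 : 0 ≤ a) (ha1 : a ≤ 1) :
    H g S 1 - H g S (1 - a) ≤ H g T 1 - H g T (1 - a) := by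
  refine le_of_forall_pos_le_add fun ε hε => ?_
  obtain ⟨yw, ⟨w, hw0, hws, rfl⟩, hyw⟩ :=
    exists_near g h0 T (t := 1 - a) (by linarith) (half_pos hε)
  set b := ∑ i ∈ S, w i with hbdef
  have hb0 : 0 ≤ b := Finset.sum_nonneg fun i _ => hw0 i
  have hbT : b ≤ ∑ i ∈ T, w i :=
    Finset.sum_le_sum_of_subset_of_nonneg hST fun i _ _ => hw0 i
  have hba : b ≤ 1 - a := le_trans hbT hws
  obtain ⟨yz, ⟨z, hz0, hzs, rfl⟩, hyz⟩ :=
    exists_near g h0 S (t := b + a) (by linarith) (half_pos hε)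
  -- the combined allocation
  have hvsum : ∑ i ∈ T, (if i ∈ S then z i else w i)
      = (∑ i ∈ T \ S, w i) + ∑ i ∈ S, z i := by
    rw [← Finset.sum_sdiff hST]
    congr 1
    · exact Finset.sum_congr rfl fun i hi => by
        rw [if_neg (Finset.mem_sdiff.mp hi).2]
    · exact Finset.sum_congr rfl fun i hi => by rw [if_pos hi]
  have hgsum : ∑ i ∈ T, g i (if i ∈ S then z i else w i)
      = (∑ i ∈ T \ S, g i (w i)) + ∑ i ∈ S, g i (z i) := by
    rw [← Finset.sum_sdiff hST]
    congr 1
    · exact Finset.sum_congr rfl fun i hi => by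
        rw [if_neg (Finset.mem_sdiff.mp hi).2]
    · exact Finset.sum_congr rfl fun i hi => by rw [if_pos hi]
  have hsdiff : (∑ i ∈ T \ S, w i) + ∑ i ∈ S, w i = ∑ i ∈ T, w i :=
    Finset.sum_sdiff hST
  have hgsdiff : (∑ i ∈ T \ S, g i (w i)) + ∑ i ∈ S, g i (w i) = ∑ i ∈ T, g i (w i) :=
    Finset.sum_sdiff hST
  have hmem : (∑ i ∈ T, g i (if i ∈ S then z i else w i)) ∈ Y g T 1 := by
    refine ⟨fun i => if i ∈ S then z i else w i, ?_, ?_, rfl⟩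
    · intro i; dsimp only; split_ifs; exacts [hz0 i, hw0 i]
    · rw [hvsum]; linarith
  have hT1 : (∑ i ∈ T, g i (if i ∈ S then z i else w i)) ≤ H g T 1 :=
    le_H g hmono T le_rfl hmem
  have hSw : (∑ i ∈ S, g i (w i)) ≤ H g S b :=
    le_H g hmono S (by linarith) ⟨w, hw0, le_rfl, rfl⟩
  have hincr := H_incr g hmono hconc h0 S ha0 ha1 hb0 hba
  rw [hgsum] at hT1
  linarith

end WFaux

theorem stmt_7 (n : ℕ) (g : Fin n → ℝ → ℝ)
    (hnonneg : ∀ i, ∀ x ∈ Set.Icc (0:ℝ) 1, 0 ≤ g i x)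
    (hmono : ∀ i, MonotoneOn (g i) (Set.Icc (0:ℝ) 1))
    (hconc : ∀ i, ConcaveOn ℝ (Set.Icc (0:ℝ) 1) (g i))
    (hcont : ∀ i, ContinuousOn (g i) (Set.Icc (0:ℝ) 1))
    (h0 : ∀ i, g i 0 = 0)
    (f : Finset (Fin n) → ℝ)
    (hf : ∀ S, f S = sSup {y : ℝ | ∃ z : Fin n → ℝ,
      (∀ i, 0 ≤ z i) ∧ (∑ i ∈ S, z i) ≤ 1 ∧ y = ∑ i ∈ S, g i (z i)}) :
    (∀ S, 0 ≤ f S) ∧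
    (∀ S T, S ⊆ T → f S ≤ f T) ∧
    (∀ S T : Finset (Fin n), ∀ j, S ⊆ T → j ∉ T →
      f (insert j T) - f T ≤ f (insert j S) - f S) := by
  have hfH : ∀ S, f S = WFaux.H g S 1 := fun S => (hf S).trans rfl
  refine ⟨?_, ?_, ?_⟩
  · intro S
    rw [hfH]
    exact WFaux.H_nonneg g hmono h0 S zero_le_one le_rfl
  · intro S T hST
    rw [hfH, hfH]
    exact WFaux.H_mono_S g hmono h0 hST zero_le_one le_rfl
  · intro S T j hST hjT
    have hjS : j ∉ S := fun h => hjT (hST h)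
    rw [hfH, hfH, hfH, hfH]
    refine le_of_forall_pos_le_add fun ε hε => ?_
    obtain ⟨y, ⟨z, hz0, hzs, rfl⟩, hy⟩ :=
      WFaux.exists_near g h0 (insert j T) (t := 1) zero_le_one (half_pos hε)
    rw [Finset.sum_insert hjT] at hzs
    set a := z j with hadef
    have ha0 : 0 ≤ a := hz0 j
    have hTz0 : 0 ≤ ∑ i ∈ T, z i := Finset.sum_nonneg fun i _ => hz0 i
    have ha1 : a ≤ 1 := by linarith
    have hval : ∑ i ∈ insert j T, g i (z i) = g j a + ∑ i ∈ T, g i (z i) :=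
      Finset.sum_insert hjT
    have hTb : (∑ i ∈ T, g i (z i)) ≤ WFaux.H g T (1 - a) :=
      WFaux.le_H g hmono T (by linarith) ⟨z, hz0, by linarith, rfl⟩
    obtain ⟨y', ⟨z', hz0', hzs', rfl⟩, hy'⟩ :=
      WFaux.exists_near g h0 S (t := 1 - a) (by linarith) (half_pos hε)
    have hmem : (g j a + ∑ i ∈ S, g i (z' i)) ∈ WFaux.Y g (insert j S) 1 := by
      refine ⟨fun i => if i = j then a else z' i, ?_, ?_, ?_⟩
      · intro i; dsimp only; split_ifs; exacts [ha0, hz0' i]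
      · simp only [Finset.sum_insert hjS, if_true]
        rw [show ∑ i ∈ S, (if i = j then a else z' i) = ∑ i ∈ S, z' i from
          Finset.sum_congr rfl fun i hi => if_neg (by rintro rfl; exact hjS hi)]
        linarith
      · simp only [Finset.sum_insert hjS, if_true]
        congr 1
        exact Finset.sum_congr rfl fun i hi => by
          rw [if_neg (show ¬ i = j by rintro rfl; exact hjS hi)]
    have hSj : g j a + ∑ i ∈ S, g i (z' i) ≤ WFaux.H g (insert j S) 1 :=
      WFaux.le_H g hmono (insert j S) le_rfl hmem
    have hex := WFaux.H_exchange g hmono hconc h0 hST ha0 ha1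
    rw [hval] at hy
    linarith
end

section
/- For an IID instance with $n$ actions where each action independently has value pair $(1,1)$ with probability $1/n$ and $(0,0)$ otherwise, the optimal sender utility with $k$ signals is $1 - (1-1/n)^k$, and the ratio satisfies $\frac{1 - (1-1/n)^k}{1 - (1-1/n)^n} \le \frac{1}{1-(1-1/n)^n} \cdot \frac{k}{n} \le \frac{e}{e-1} \cdot \frac{k}{n}$ for all $2 \le k \le n$. -/
theorem stmt_10 (n k : ℕ) (hk : 2 ≤ k) (hkn : k ≤ n) :
    (1 - (1 - 1 / (n : ℝ)) ^ k) / (1 - (1 - 1 / (n : ℝ)) ^ n) ≤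
      (1 / (1 - (1 - 1 / (n : ℝ)) ^ n)) * ((k : ℝ) / n) ∧
    (1 / (1 - (1 - 1 / (n : ℝ)) ^ n)) * ((k : ℝ) / n) ≤
      (Real.exp 1 / (Real.exp 1 - 1)) * ((k : ℝ) / n) := by
  have hn2 : 2 ≤ n := le_trans hk hkn
  have hn0 : (0 : ℝ) < n := by positivity
  have hninv : (0 : ℝ) < 1 / n := by positivity
  have hx0 : (0 : ℝ) ≤ 1 - 1 / n := by
    rw [sub_nonneg]
    rw [div_le_one hn0]
    exact_mod_cast Nat.one_le_of_lt hn2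
  have hx1 : (1 : ℝ) - 1 / n < 1 := by linarith
  have hxn : (1 - 1 / (n : ℝ)) ^ n < 1 :=
    pow_lt_one₀ hx0 hx1 (by omega)
  have hD : (0 : ℝ) < 1 - (1 - 1 / (n : ℝ)) ^ n := by linarith
  constructor
  · rw [div_eq_mul_one_div, mul_comm]
    apply mul_le_mul_of_nonneg_left _ (le_of_lt (by positivity))
    -- 1 - x^k ≤ k/n, i.e. 1 - k/n ≤ x^k
    have hb : 1 + (k : ℝ) * (-(1 / n)) ≤ (1 + (-(1 / n))) ^ k :=
      one_add_mul_le_pow (by linarith) k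
    have : (1 : ℝ) - k / n ≤ (1 - 1 / n) ^ k := by
      rw [sub_eq_add_neg (1:ℝ) (1/(n:ℝ))]
      calc (1 : ℝ) - k / n = 1 + (k : ℝ) * (-(1 / n)) := by ring
        _ ≤ _ := hb
    linarith
  · apply mul_le_mul_of_nonneg_right _ (by positivity)
    rw [div_le_div_iff₀ hD (by have := Real.add_one_le_exp (1:ℝ); linarith)]
    have hexp : (1 - 1 / (n : ℝ)) ^ n ≤ Real.exp (-1) := by
      have h1 : (1 : ℝ) - 1 / n ≤ Real.exp (-(1 / n)) := by
        have := Real.add_one_le_exp (-(1 / (n : ℝ)))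
        linarith
      calc (1 - 1 / (n : ℝ)) ^ n ≤ Real.exp (-(1 / n)) ^ n :=
            pow_le_pow_left₀ hx0 h1 n
        _ = Real.exp (-1) := by
            rw [← Real.exp_nat_mul]
            congr 1
            field_simp
    have he : Real.exp (-1) * Real.exp 1 = 1 := by
      rw [← Real.exp_add]; norm_num
    have hepos : (0 : ℝ) < Real.exp 1 := Real.exp_pos 1
    nlinarith [mul_le_mul_of_nonneg_right hexp hepos.le]
end
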